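/- Let ρ > 0, let Q = (−ρ, ρ) × (−ρ, ρ) ⊂ ℝ² be the open square, let θ ∈ ℝ be such that θ/π is irrational, and let R_φ denote the rotation of ℝ² by angle φ about the origin. Then the set Ω = ⋂_{n ∈ ℤ} R_{nθ}(Q) is not an open subset of ℝ². -/

import Mathlib

/-!
Let `p = ρ (cos (θ/2), sin (θ/2))`. Rotating `p` back by `nθ` gives the point of angle
`(1/2 - n) θ` on the circle of radius `ρ`, which lies on neither axis because `(1 - 2n) θ` is not
a multiple of `π`; so it lies in the open square, and `p ∈ Ω`. On the other hand, `(ρ, 0)` is not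
in the square, so no rotation `R_{nθ} (ρ, 0)` lies in `Ω`, and these points are dense in the
circle of radius `ρ` because `θ / 2π` is irrational. Hence `p` is in `Ω` but not in its interior.
-/

open Real Set

noncomputable def planeRotation (φ : ℝ) (p : EuclideanSpace ℝ (Fin 2)) :
    EuclideanSpace ℝ (Fin 2) :=
  !₂[cos φ * p 0 - sin φ * p 1, sin φ * p 0 + cos φ * p 1]

noncomputable def polarPoint (r t : ℝ) : EuclideanSpace ℝ (Fin 2) := !₂[r * cos t, r * sin t]

def openSquare (ρ : ℝ) : Set (EuclideanSpace ℝ (Fin 2)) :=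
  {p | p 0 ∈ Ioo (-ρ) ρ ∧ p 1 ∈ Ioo (-ρ) ρ}

theorem planeRotation_neg_planeRotation (φ : ℝ) (p : EuclideanSpace ℝ (Fin 2)) :
    planeRotation (-φ) (planeRotation φ p) = p := by
  ext i
  fin_cases i
  · simp [planeRotation]
    linear_combination p 0 * cos_sq_add_sin_sq φ
  · simp [planeRotation]
    linear_combination p 1 * cos_sq_add_sin_sq φ

theorem planeRotation_injective (φ : ℝ) : Function.Injective (planeRotation φ) :=
  Function.LeftInverse.injective (planeRotation_neg_planeRotation φ)

theorem planeRotation_polarPoint (φ r t : ℝ) :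
    planeRotation φ (polarPoint r t) = polarPoint r (t + φ) := by
  ext i
  fin_cases i
  · simp [planeRotation, polarPoint, cos_add]
    ring
  · simp [planeRotation, polarPoint, sin_add]
    ring

theorem polarPoint_mem_planeRotation_image_iff {φ r t : ℝ} {s : Set (EuclideanSpace ℝ (Fin 2))} :
    polarPoint r t ∈ planeRotation φ '' s ↔ polarPoint r (t - φ) ∈ s := by
  rw [← (planeRotation_injective φ).mem_set_image (a := polarPoint r (t - φ)),
    planeRotation_polarPoint, sub_add_cancel]

theorem polarPoint_mem_closure_range_int_mul {θ : ℝ} (hθ : Irrational (θ / (2 * π))) (r t : ℝ) :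
    polarPoint r t ∈ closure (range fun n : ℤ => polarPoint r (n * θ)) := by
  let g : Angle → EuclideanSpace ℝ (Fin 2) := fun ψ => !₂[r * ψ.cos, r * ψ.sin]
  have hg : Continuous g := by
    have := Angle.continuous_cos
    have := Angle.continuous_sin
    fun_prop
  have hdense : DenseRange fun n : ℤ => n • (θ : Angle) :=
    AddCircle.denseRange_zsmul_coe_iff.2 hθ
  have hgn : g ∘ (fun n : ℤ => n • (θ : Angle)) = fun n : ℤ => polarPoint r (n * θ) := by
    ext n : 1
    simp only [Function.comp_apply, g, polarPoint, ← Angle.coe_zsmul, zsmul_eq_mul,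
      Angle.cos_coe, Angle.sin_coe]
  rw [← hgn, range_comp]
  apply image_closure_subset_closure_image hg
  rw [hdense.closure_range]
  exact ⟨t, mem_univ _, by simp [g, polarPoint]⟩

theorem abs_cos_lt_one_of_sin_ne_zero {t : ℝ} (h : sin t ≠ 0) : |cos t| < 1 := by
  rw [← sq_lt_one_iff_abs_lt_one]
  nlinarith [sin_sq_add_cos_sq t, pow_pos (abs_pos.2 h) 2, sq_abs (sin t)]

theorem abs_sin_lt_one_of_cos_ne_zero {t : ℝ} (h : cos t ≠ 0) : |sin t| < 1 := by
  rw [← sq_lt_one_iff_abs_lt_one]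
  nlinarith [sin_sq_add_cos_sq t, pow_pos (abs_pos.2 h) 2, sq_abs (cos t)]

theorem polarPoint_mem_openSquare {ρ t : ℝ} (hρ : 0 < ρ) (h : sin (2 * t) ≠ 0) :
    polarPoint ρ t ∈ openSquare ρ := by
  rw [sin_two_mul] at h
  have hsin : sin t ≠ 0 := by contrapose! h; simp [h]
  have hcos : cos t ≠ 0 := by contrapose! h; simp [h]
  simp only [openSquare, polarPoint, mem_ofPred_eq, Matrix.cons_val_zero, Matrix.cons_val_one,
    mem_Ioo, ← abs_lt, abs_mul, abs_of_pos hρ]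
  exact ⟨mul_lt_of_lt_one_right hρ (abs_cos_lt_one_of_sin_ne_zero hsin),
    mul_lt_of_lt_one_right hρ (abs_sin_lt_one_of_cos_ne_zero hcos)⟩

theorem polarPoint_zero_notMem_openSquare (ρ : ℝ) : polarPoint ρ 0 ∉ openSquare ρ := by
  simp [openSquare, polarPoint]

theorem sin_int_mul_ne_zero {θ : ℝ} (hθ : Irrational (θ / π)) {m : ℤ} (hm : m ≠ 0) :
    sin (m * θ) ≠ 0 := by
  intro h
  obtain ⟨k, hk⟩ := sin_eq_zero_iff.1 h
  refine hθ ⟨k / m, ?_⟩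
  push_cast
  field_simp
  linarith

/-- For the open square `Q = (-ρ, ρ) × (-ρ, ρ)` and `θ` with `θ/π` irrational, the set
`Ω = ⋂_{n ∈ ℤ} R_{nθ}(Q)` is not open in `ℝ²`. -/
theorem not_isOpen_iInter_rotated_squares
    (ρ : ℝ) (hρ : 0 < ρ)
    (Q : Set (EuclideanSpace ℝ (Fin 2)))
    (hQ : Q = {p | p 0 ∈ Set.Ioo (-ρ) ρ ∧ p 1 ∈ Set.Ioo (-ρ) ρ})
    (θ : ℝ) (hθ : Irrational (θ / π))
    (Rot : ℝ → EuclideanSpace ℝ (Fin 2) → EuclideanSpace ℝ (Fin 2))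
    (hRot : ∀ φ p, Rot φ p = ![cos φ * p 0 - sin φ * p 1,
                               sin φ * p 0 + cos φ * p 1])
    (Ω : Set (EuclideanSpace ℝ (Fin 2)))
    (hΩ : Ω = ⋂ n : ℤ, Rot (n * θ) '' Q) :
    ¬ IsOpen Ω := by
  obtain rfl : Q = openSquare ρ := hQ
  obtain rfl : Rot = planeRotation := funext₂ fun φ p => WithLp.ofLp_injective _ (hRot φ p)
  subst hΩ
  intro hOpen
  have hp : polarPoint ρ (θ / 2) ∈ ⋂ n : ℤ, planeRotation (n * θ) '' openSquare ρ := by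
    refine mem_iInter.2 fun n => ?_
    rw [polarPoint_mem_planeRotation_image_iff]
    refine polarPoint_mem_openSquare hρ ?_
    have hodd : (1 - 2 * n : ℤ) ≠ 0 := by omega
    convert sin_int_mul_ne_zero hθ hodd using 2
    push_cast
    ring
  have hw : range (fun n : ℤ => polarPoint ρ (n * θ)) ⊆
      (⋂ n : ℤ, planeRotation (n * θ) '' openSquare ρ)ᶜ := by
    rintro _ ⟨n, rfl⟩ hn
    have := polarPoint_mem_planeRotation_image_iff.1 (mem_iInter.1 hn n)
    rw [sub_self] at this
    exact polarPoint_zero_notMem_openSquare ρ this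
  have hθ2 : Irrational (θ / (2 * π)) := by
    simpa [div_div, mul_comm] using hθ.div_natCast two_ne_zero
  have hp_closure := closure_mono hw (polarPoint_mem_closure_range_int_mul hθ2 ρ (θ / 2))
  rw [closure_compl, hOpen.interior_eq] at hp_closure
  exact hp_closure hp
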